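/- The 'case' operation on distributions with error is ⊑-monotone: if u¹ ⊑ u² in Flat_e(I) and v¹(i) ⊑ v²(i) in Flat_e(J) for all i ∈ I, then ∑_{i∈I} u¹_i v¹(i) + u¹_⊤ e_⊤ ⊑ ∑_{i∈I} u²_i v²(i) + u²_⊤ e_⊤ in Flat_e(J). -/

import Mathlib

/-!
If `u ⊑ v` then `u_⊤ + ∑ u_i g_i ≤ v_⊤ + ∑ v_i g_i` for every `g ≤ 1`: termwise
`u_i g_i ≤ v_i g_i + (u_i - v_i)⁺`, and the total excess `∑ (u_i - v_i)⁺` lives on the inversion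
set, where `⊑` bounds it by `v_⊤ - u_⊤`.

The mass that `case(u, v)` puts on `{⊤} ∪ A` is `u_⊤ + ∑ u_i m_i(A)`, where `m_i(A) ≤ 1` is the
mass `v(i)` puts on `{⊤} ∪ A`. Taking `g` the indicator of `A` gives `m¹_i(A) ≤ m²_i(A)`, and then
`g = m²(A)` gives `u¹_⊤ + ∑ u¹_i m²_i(A) ≤ u²_⊤ + ∑ u²_i m²_i(A)`; for `A` the inversion set of
the two `case`s this is the claim.
-/

open scoped ENNReal

noncomputable section

def dot {I : Type*} (u v : I → ℝ≥0∞) : ℝ≥0∞ := ∑' i, u i * v i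

def orth {I : Type*} (P : Set (I → ℝ≥0∞)) : Set (I → ℝ≥0∞) :=
  {v | ∀ u ∈ P, dot u v ≤ 1}

/-- The Dirac mass at the error element `⊤` (encoded as `none`). -/
def eTop {I : Type*} : Option I → ℝ≥0∞ := fun x => x.elim 1 fun _ => 0

/-- Sub-probability distributions on `I` with an extra error point `⊤ = none`. -/
def Pflat (I : Type*) : Set (Option I → ℝ≥0∞) := {u | ∑' x, u x ≤ 1}

/-- The extensional preorder on `Pflat I`, defined via inversion indices:
`u ⊑ v` iff `u ⊤ + ∑_{i : u i > v i} u i ≤ v ⊤ + ∑_{i : u i > v i} v i`. -/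
def extLE {I : Type*} (u v : Option I → ℝ≥0∞) : Prop :=
  u none + ∑' i : {i : I // v (some i) < u (some i)}, u (some i.1)
    ≤ v none + ∑' i : {i : I // v (some i) < u (some i)}, v (some i.1)

/-- The `case` operation: `case(u, v) = ∑_i u_i · v(i) + u_⊤ · e_⊤`. -/
def caseOp {I J : Type*} (u : Option I → ℝ≥0∞) (v : I → Option J → ℝ≥0∞) :
    Option J → ℝ≥0∞ :=
  fun b => (∑' i, u (some i) * v i b) + u none * eTop b

/-- The mass that `w` puts on `{⊤} ∪ A`. -/
def massOn {α : Type*} (w : Option α → ℝ≥0∞) (A : Set α) : ℝ≥0∞ :=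
  w none + ∑' a : A, w (some a)

lemma ENNReal.tsum_option {α : Type*} (f : Option α → ℝ≥0∞) :
    ∑' x, f x = f none + ∑' a, f (some a) := by
  rw [← (Equiv.optionEquivSumPUnit.{0} α).symm.tsum_eq,
    Summable.tsum_sum ENNReal.summable ENNReal.summable, add_comm]
  simp

lemma massOn_le_one {α : Type*} {w : Option α → ℝ≥0∞} (hw : w ∈ Pflat α) (A : Set α) :
    massOn w A ≤ 1 :=
  calc massOn w A ≤ w none + ∑' a, w (some a) := by
        unfold massOn
        gcongr
        exact ENNReal.tsum_comp_le_tsum_of_injective Subtype.val_injective _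
    _ = ∑' x, w x := (ENNReal.tsum_option w).symm
    _ ≤ 1 := hw

lemma ENNReal.mul_le_mul_add_tsub {a b g : ℝ≥0∞} (hg : g ≤ 1) : a * g ≤ b * g + (a - b) :=
  calc a * g ≤ (b + (a - b)) * g := by gcongr; exact le_add_tsub
    _ = b * g + (a - b) * g := add_mul _ _ _
    _ ≤ b * g + (a - b) := by gcongr; exact mul_le_of_le_one_right' hg

namespace extLE

variable {α : Type*} {u v : Option α → ℝ≥0∞}

lemma add_tsum_tsub_le (hv : v ∈ Pflat α) (h : extLE u v) :
    u none + ∑' i, (u (some i) - v (some i)) ≤ v none := by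
  set B : Set α := {i | v (some i) < u (some i)}
  have h_excess : ∑' i : B, (u (some i) - v (some i)) = ∑' i, (u (some i) - v (some i)) :=
    tsum_subtype_eq_of_support_subset fun i hi =>
      not_le.mp fun hle => hi (tsub_eq_zero_of_le hle)
  have h_split : ∑' i : B, u (some i) = ∑' i : B, v (some i) + ∑' i : B, (u (some i) - v (some i)) := by
    rw [← ENNReal.tsum_add]
    exact tsum_congr fun i => (add_tsub_cancel_of_le i.2.le).symm
  have h_fin : ∑' i : B, v (some i) ≠ ∞ :=
    ((le_add_self.trans (massOn_le_one hv B)).trans_lt ENNReal.one_lt_top).ne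
  have h' : u none + ∑' i : B, u (some i) ≤ v none + ∑' i : B, v (some i) := h
  rw [← h_excess, ← ENNReal.add_le_add_iff_right h_fin]
  calc _ = u none + ∑' i : B, u (some i) := by rw [h_split]; ring
    _ ≤ _ := h'

/-- The paper's form of `⊑`, with the test `u'` normalised to `u'_⊤ = 1`. -/
lemma add_tsum_mul_le (hv : v ∈ Pflat α) (h : extLE u v) {g : α → ℝ≥0∞} (hg : ∀ i, g i ≤ 1) :
    u none + ∑' i, u (some i) * g i ≤ v none + ∑' i, v (some i) * g i :=
  calc u none + ∑' i, u (some i) * g i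
      ≤ u none + ∑' i, (v (some i) * g i + (u (some i) - v (some i))) := by
        gcongr with i
        exact ENNReal.mul_le_mul_add_tsub (hg i)
    _ = (u none + ∑' i, (u (some i) - v (some i))) + ∑' i, v (some i) * g i := by
        rw [ENNReal.tsum_add]; ring
    _ ≤ v none + ∑' i, v (some i) * g i := by gcongr; exact h.add_tsum_tsub_le hv

lemma massOn_le (hv : v ∈ Pflat α) (h : extLE u v) (A : Set α) : massOn u A ≤ massOn v A := by
  have h_ind (w : α → ℝ≥0∞) : ∑' a, w a * A.indicator 1 a = ∑' a : A, w a := by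
    simp_rw [← Set.indicator_mul_right, Pi.one_apply, mul_one, tsum_subtype]
  have := h.add_tsum_mul_le hv (g := A.indicator 1)
    fun _ => Set.indicator_apply_le' (fun _ => le_rfl) fun _ => zero_le_one
  rwa [h_ind, h_ind] at this

end extLE

lemma massOn_caseOp {I J : Type*} (u : Option I → ℝ≥0∞) (v : I → Option J → ℝ≥0∞) (A : Set J) :
    massOn (caseOp u v) A = u none + ∑' i, u (some i) * massOn (v i) A := by
  simp only [massOn, caseOp, eTop, Option.elim, mul_one, mul_zero, add_zero, mul_add,
    ENNReal.tsum_add]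
  rw [ENNReal.tsum_comm]
  simp only [ENNReal.tsum_mul_left]
  ring

theorem stmt15_general {I J : Type*}
    (u₁ u₂ : Option I → ℝ≥0∞) (hu₂ : u₂ ∈ Pflat I)
    (v₁ v₂ : I → Option J → ℝ≥0∞)
    (hv₂ : ∀ i, v₂ i ∈ Pflat J)
    (hu : extLE u₁ u₂) (hv : ∀ i, extLE (v₁ i) (v₂ i)) :
    extLE (caseOp u₁ v₁) (caseOp u₂ v₂) := by
  set A : Set J := {j | caseOp u₂ v₂ (some j) < caseOp u₁ v₁ (some j)}
  change massOn (caseOp u₁ v₁) A ≤ massOn (caseOp u₂ v₂) A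
  rw [massOn_caseOp, massOn_caseOp]
  calc u₁ none + ∑' i, u₁ (some i) * massOn (v₁ i) A
      ≤ u₁ none + ∑' i, u₁ (some i) * massOn (v₂ i) A := by
        gcongr with i
        exact (hv i).massOn_le (hv₂ i) A
    _ ≤ u₂ none + ∑' i, u₂ (some i) * massOn (v₂ i) A :=
        hu.add_tsum_mul_le hu₂ fun i => massOn_le_one (hv₂ i) A

theorem stmt15 {I J : Type*} [Countable I] [Countable J]
    (u₁ u₂ : Option I → ℝ≥0∞) (hu₁ : u₁ ∈ Pflat I) (hu₂ : u₂ ∈ Pflat I)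
    (v₁ v₂ : I → Option J → ℝ≥0∞)
    (hv₁ : ∀ i, v₁ i ∈ Pflat J) (hv₂ : ∀ i, v₂ i ∈ Pflat J)
    (hu : extLE u₁ u₂) (hv : ∀ i, extLE (v₁ i) (v₂ i)) :
    extLE (caseOp u₁ v₁) (caseOp u₂ v₂) :=
  stmt15_general u₁ u₂ hu₂ v₁ v₂ hv₂ hu hv
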